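/- Let 𝔽_q be a finite field, ψ : 𝔽_q → ℂˣ a nontrivial additive character, and α₁, α₂, β₁, β₂ multiplicative characters of 𝔽_q with α₁ ≠ β₁ and α₂ ≠ β₂. Then the sum Σ ψ(x₁+x₂−y₁−y₂) · α₁(x₁) · α₂(x₂) · β₁⁻¹(y₁) · β₂⁻¹(y₂), taken over all quadruples (x₁,x₂,y₁,y₂) ∈ 𝔽_q⁴ with y₁ ≠ 0, y₂ ≠ 0 and x₁·x₂ = y₁·y₂, equals (β₁α₁⁻¹)(−1) · g(ψ, α₁β₁⁻¹) · g(ψ, α₂β₂⁻¹) · J(α₁β₂⁻¹, β₁β₂α₁⁻¹α₂⁻¹). -/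

import Mathlib

/-!
On the variety `x₁ x₂ = y₁ y₂` with `y₁ y₂ ≠ 0`, write `x₁ = u y₁` and `x₂ = u⁻¹ y₂`. The sum
then factors, for each fixed `u`, into two Gauss sums twisted by `y ↦ ψ((u - 1) y)` and
`y ↦ ψ((u⁻¹ - 1) y)`; since `α₁β₁⁻¹` and `α₂β₂⁻¹` are nontrivial, each is a character value
times `g(ψ, αᵢβᵢ⁻¹)`. What remains of the sum over `u` is the Jacobi sum.
-/

open Finset

theorem sum_filter_mul_eq_mul_eq_sum_filter_ne_zero {F M : Type*} [Field F] [Fintype F]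
    [DecidableEq F] [AddCommMonoid M] (f : F × F × F × F → M) :
    ∑ v ∈ univ.filter (fun v : F × F × F × F =>
        v.2.2.1 ≠ 0 ∧ v.2.2.2 ≠ 0 ∧ v.1 * v.2.1 = v.2.2.1 * v.2.2.2), f v
      = ∑ w ∈ univ.filter (fun w : F × F × F => w.1 ≠ 0 ∧ w.2.1 ≠ 0 ∧ w.2.2 ≠ 0),
          f (w.1 * w.2.1, w.1⁻¹ * w.2.2, w.2.1, w.2.2) := by
  symm
  refine sum_nbij' (fun w => (w.1 * w.2.1, w.1⁻¹ * w.2.2, w.2.1, w.2.2))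
    (fun v => (v.1 / v.2.2.1, v.2.2.1, v.2.2.2)) ?_ ?_ ?_ ?_ fun _ _ => rfl
  · rintro ⟨u, y₁, y₂⟩
    simp only [mem_filter, mem_univ, true_and]
    rintro ⟨hu, hy₁, hy₂⟩
    exact ⟨hy₁, hy₂, by field_simp⟩
  · rintro ⟨x₁, x₂, y₁, y₂⟩
    simp only [mem_filter, mem_univ, true_and]
    rintro ⟨hy₁, hy₂, hxy⟩
    have hx₁ : x₁ ≠ 0 := left_ne_zero_of_mul (hxy ▸ mul_ne_zero hy₁ hy₂)
    exact ⟨div_ne_zero hx₁ hy₁, hy₁, hy₂⟩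
  · rintro ⟨u, y₁, y₂⟩
    simp only [mem_filter, mem_univ, true_and, Prod.mk.injEq, and_true]
    rintro ⟨-, hy₁, -⟩
    exact mul_div_cancel_right₀ u hy₁
  · rintro ⟨x₁, x₂, y₁, y₂⟩
    simp only [mem_filter, mem_univ, true_and, Prod.mk.injEq, and_true]
    rintro ⟨hy₁, hy₂, hxy⟩
    refine ⟨div_mul_cancel₀ x₁ hy₁, ?_⟩
    have hx₁ : x₁ ≠ 0 := left_ne_zero_of_mul (hxy ▸ mul_ne_zero hy₁ hy₂)
    field_simp
    linear_combination hxy.symm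

section

variable {F R : Type*} [Field F] [CommRing R]

theorem addChar_mul_mulChar_mul_eq_mulShift (ψ : AddChar F R) (α₁ α₂ β₁ β₂ : MulChar F R)
    (u y₁ y₂ : F) :
    ψ (u * y₁ + u⁻¹ * y₂ - y₁ - y₂) * α₁ (u * y₁) * α₂ (u⁻¹ * y₂) * β₁⁻¹ y₁ * β₂⁻¹ y₂
      = α₁ u * α₂ u⁻¹ * ((α₁ * β₁⁻¹) y₁ * ψ.mulShift (u - 1) y₁) *
          ((α₂ * β₂⁻¹) y₂ * ψ.mulShift (u⁻¹ - 1) y₂) := by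
  rw [show u * y₁ + u⁻¹ * y₂ - y₁ - y₂ = (u - 1) * y₁ + (u⁻¹ - 1) * y₂ by ring,
    AddChar.map_add_eq_mul]
  simp only [map_mul, MulChar.mul_apply, AddChar.mulShift_apply]
  ring

theorem gaussSum_mulShift_eq_of_ne_one [Fintype F] [IsDomain R] {χ : MulChar F R} (hχ : χ ≠ 1)
    (ψ : AddChar F R) (c : F) : gaussSum χ (ψ.mulShift c) = χ⁻¹ c * gaussSum χ ψ := by
  rcases eq_or_ne c 0 with rfl | hc
  · rw [AddChar.mulShift_zero, gaussSum_one_right hχ, MulChar.map_zero, zero_mul]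
  · exact gaussSum_mulShift_eq χ ψ (Units.mk0 c hc)

theorem MulChar.apply_mul_inv_apply_sub_one_mul_inv_apply_inv_sub_one
    (α₁ α₂ β₁ β₂ : MulChar F R) (u : F) :
    α₁ u * α₂ u⁻¹ * (α₁ * β₁⁻¹)⁻¹ (u - 1) * (α₂ * β₂⁻¹)⁻¹ (u⁻¹ - 1)
      = (β₁ * α₁⁻¹) (-1) * ((α₁ * β₂⁻¹) u * (β₁ * β₂ * α₁⁻¹ * α₂⁻¹) (1 - u)) := by
  rcases eq_or_ne u 0 with rfl | hu
  · simp
  have hα₂ : α₂ u⁻¹ * α₂⁻¹ u⁻¹ = 1 := by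
    rw [← MulChar.mul_apply, mul_inv_cancel, MulChar.one_apply (inv_ne_zero hu).isUnit]
  rw [show u - 1 = -1 * (1 - u) by ring, show u⁻¹ - 1 = u⁻¹ * (1 - u) by field_simp]
  simp only [mul_inv_rev, inv_inv, MulChar.mul_apply, map_mul, MulChar.inv_apply' β₂ u]
  linear_combination (α₁ u * β₂ u⁻¹ * β₁ (-1) * α₁⁻¹ (-1) * β₁ (1 - u) * α₁⁻¹ (1 - u) *
    β₂ (1 - u) * α₂⁻¹ (1 - u)) * hα₂

end

theorem hypergeometric_sum_at_one_general
    {F : Type*} [Field F] [Fintype F] [DecidableEq F]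
    (ψ : AddChar F ℂ)
    (α₁ α₂ β₁ β₂ : MulChar F ℂ) (h₁ : α₁ ≠ β₁) (h₂ : α₂ ≠ β₂) :
    ∑ v ∈ Finset.univ.filter
        (fun v : F × F × F × F =>
          v.2.2.1 ≠ 0 ∧ v.2.2.2 ≠ 0 ∧ v.1 * v.2.1 = v.2.2.1 * v.2.2.2),
      ψ (v.1 + v.2.1 - v.2.2.1 - v.2.2.2) * α₁ v.1 * α₂ v.2.1 * β₁⁻¹ v.2.2.1 * β₂⁻¹ v.2.2.2
      = (β₁ * α₁⁻¹) (-1) * gaussSum (α₁ * β₁⁻¹) ψ * gaussSum (α₂ * β₂⁻¹) ψ *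
          jacobiSum (α₁ * β₂⁻¹) (β₁ * β₂ * α₁⁻¹ * α₂⁻¹) := by
  have hχ₁ : α₁ * β₁⁻¹ ≠ 1 := mt mul_inv_eq_one.mp h₁
  have hχ₂ : α₂ * β₂⁻¹ ≠ 1 := mt mul_inv_eq_one.mp h₂
  rw [sum_filter_mul_eq_mul_eq_sum_filter_ne_zero]
  simp only [addChar_mul_mulChar_mul_eq_mulShift]
  rw [sum_filter_of_ne fun w _ hw => ?vanish]
  case vanish => refine ⟨?_, ?_, ?_⟩ <;> rintro h <;> simp [h, MulChar.map_zero] at hw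
  calc _ = ∑ u, α₁ u * α₂ u⁻¹ * gaussSum (α₁ * β₁⁻¹) (ψ.mulShift (u - 1)) *
          gaussSum (α₂ * β₂⁻¹) (ψ.mulShift (u⁻¹ - 1)) := by
        refine (Fintype.sum_prod_type _).trans (sum_congr rfl fun u _ => ?_)
        rw [mul_assoc, gaussSum, gaussSum, sum_mul_sum, mul_sum, Fintype.sum_prod_type]
        simp only [mul_sum, mul_assoc]
    _ = ∑ u, gaussSum (α₁ * β₁⁻¹) ψ * gaussSum (α₂ * β₂⁻¹) ψ *
          (α₁ u * α₂ u⁻¹ * (α₁ * β₁⁻¹)⁻¹ (u - 1) * (α₂ * β₂⁻¹)⁻¹ (u⁻¹ - 1)) := by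
        simp only [gaussSum_mulShift_eq_of_ne_one hχ₁, gaussSum_mulShift_eq_of_ne_one hχ₂]
        exact sum_congr rfl fun u _ => by ring
    _ = _ := by
        simp only [MulChar.apply_mul_inv_apply_sub_one_mul_inv_apply_inv_sub_one, ← mul_sum,
          jacobiSum]
        ring

/-- Evaluation at t = 1 of the finite-field ₂F₁ character sum (Corollary 7.3 of the paper). -/
theorem hypergeometric_sum_at_one
    {F : Type*} [Field F] [Fintype F] [DecidableEq F]
    (ψ : AddChar F ℂ) (hψ : ψ ≠ 1)
    (α₁ α₂ β₁ β₂ : MulChar F ℂ) (h₁ : α₁ ≠ β₁) (h₂ : α₂ ≠ β₂) :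
    ∑ v ∈ Finset.univ.filter
        (fun v : F × F × F × F =>
          v.2.2.1 ≠ 0 ∧ v.2.2.2 ≠ 0 ∧ v.1 * v.2.1 = v.2.2.1 * v.2.2.2),
      ψ (v.1 + v.2.1 - v.2.2.1 - v.2.2.2) * α₁ v.1 * α₂ v.2.1 * β₁⁻¹ v.2.2.1 * β₂⁻¹ v.2.2.2
      = (β₁ * α₁⁻¹) (-1) * gaussSum (α₁ * β₁⁻¹) ψ * gaussSum (α₂ * β₂⁻¹) ψ *
          jacobiSum (α₁ * β₂⁻¹) (β₁ * β₂ * α₁⁻¹ * α₂⁻¹) :=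
  hypergeometric_sum_at_one_general ψ α₁ α₂ β₁ β₂ h₁ h₂
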